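/- For β > β₀, let z₀(β) denote the unique fixed point of F(·;β) in [0,1]^n \ {0}. If β₀ < β₁ ≤ β₂ < 1, then z₀(β₁) ⪯ z₀(β₂) componentwise; in particular, the map β ↦ ‖z₀(β)‖₂ (Euclidean norm) is monotone increasing on (β₀, 1). -/
import Mathlib


open Filter Finset

/-- The MMCA map `F`. -/
noncomputable def F {n : ℕ} (R : Matrix (Fin n) (Fin n) ℝ) (β μ : ℝ) (x : Fin n → ℝ) :
    Fin n → ℝ :=
  fun i => 1 - (1 - (1 - μ) * x i) * ∏ j, (1 - β * R i j * x j)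

/-- Irreducibility of a (nonnegative) square matrix. -/
def MatIrred {n : ℕ} (R : Matrix (Fin n) (Fin n) ℝ) : Prop :=
  ∀ i j : Fin n, ∃ k : ℕ, 0 < k ∧ (R ^ k) i j ≠ 0

/-- Spectral radius of a real matrix, as the supremum of the absolute values of the
real spectrum (appropriate here since `R` is symmetric). -/
noncomputable def specRad {n : ℕ} (R : Matrix (Fin n) (Fin n) ℝ) : ℝ :=
  sSup {r : ℝ | ∃ z ∈ spectrum ℝ R, |z| = r}

lemma step3_alg (t x Pt P1 a : ℝ) (hsub : 1 - Pt ≤ t * (1 - P1))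
    (hlt : a * (t * x) * Pt < a * (t * x) * P1) :
    1 - (1 - a * (t * x)) * Pt < t * (1 - (1 - a * x) * P1) := by nlinarith

-- sublinearity lemma
lemma one_sub_prod_le {ι : Type*} [DecidableEq ι] (s : Finset ι) (c : ι → ℝ) (t : ℝ) (ht : 1 ≤ t)
    (hc : ∀ j, 0 ≤ c j) (hct : ∀ j, t * c j ≤ 1) :
    (0 ≤ ∏ j ∈ s, (1 - t * c j)) ∧ (∏ j ∈ s, (1 - t * c j) ≤ ∏ j ∈ s, (1 - c j)) ∧
    (∏ j ∈ s, (1 - c j) ≤ 1) ∧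
    (1 - ∏ j ∈ s, (1 - t * c j) ≤ t * (1 - ∏ j ∈ s, (1 - c j))) := by
  induction s using Finset.induction with
  | empty => simp
  | @insert a s ha ih =>
    obtain ⟨h0, h1, h2, h3⟩ := ih
    have hca : 0 ≤ c a := hc a
    have hcta : t * c a ≤ 1 := hct a
    have hc1 : c a ≤ t * c a := by nlinarith
    rw [Finset.prod_insert ha, Finset.prod_insert ha]
    have hA : (0:ℝ) ≤ 1 - t * c a := by linarith
    have hB : (1:ℝ) - t * c a ≤ 1 - c a := by linarith
    have hC : (0:ℝ) ≤ 1 - c a := by linarith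
    have hP1 : 0 ≤ ∏ j ∈ s, (1 - c j) := le_trans h0 h1
    refine ⟨mul_nonneg hA h0, mul_le_mul hB h1 h0 hC, ?_, ?_⟩
    · nlinarith
    · have hfac : t * c a * ∏ j ∈ s, (1 - t * c j) ≤ t * c a * ∏ j ∈ s, (1 - c j) :=
        mul_le_mul_of_nonneg_left h1 (by nlinarith)
      nlinarith [hfac, h3]

lemma row_ne {n : ℕ} (R : Matrix (Fin n) (Fin n) ℝ) (hirr : MatIrred R) (i : Fin n) :
    ∃ j, R i j ≠ 0 := by
  obtain ⟨k, hk, hkne⟩ := hirr i i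
  obtain ⟨m, rfl⟩ : ∃ m, k = m + 1 := ⟨k - 1, (Nat.succ_pred_eq_of_pos hk).symm⟩
  rw [pow_succ', Matrix.mul_apply] at hkne
  by_contra hcon
  push_neg at hcon
  exact hkne (Finset.sum_eq_zero fun l _ => by rw [hcon l, zero_mul])

lemma fp_pos {n : ℕ} (R : Matrix (Fin n) (Fin n) ℝ)
    (hR : ∀ i j, R i j ∈ Set.Icc (0:ℝ) 1) (hirr : MatIrred R)
    (μ β : ℝ) (hμ0 : 0 < μ) (hμ1 : μ < 1) (hβ : 0 < β) (hβ1 : β < 1)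
    (z : Fin n → ℝ) (hz : ∀ i, z i ∈ Set.Icc (0:ℝ) 1) (hz0 : z ≠ 0)
    (hfix : F R β μ z = z) : ∀ i, 0 < z i := by
  have hzero : ∀ i, z i = 0 → ∀ j, R i j * z j = 0 := by
    intro i hi j
    have h := congrFun hfix i
    simp only [F, hi, mul_zero, sub_zero, one_mul] at h
    have hprod : ∏ l, (1 - β * R i l * z l) = 1 := by linarith
    have hfac : ∀ l, 0 ≤ 1 - β * R i l * z l := by
      intro l
      have h1 := (hR i l).1; have h2 := (hR i l).2
      have h3 := (hz l).1; have h4 := (hz l).2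
      have hrz : R i l * z l ≤ 1 := mul_le_one₀ h2 h3 h4
      have hrz0 : 0 ≤ R i l * z l := mul_nonneg h1 h3
      nlinarith [mul_le_of_le_one_right hβ.le hrz]
    have hfac1 : ∀ l, 1 - β * R i l * z l ≤ 1 := by
      intro l
      have := mul_nonneg (mul_nonneg hβ.le (hR i l).1) (hz l).1
      linarith
    have hE : ∏ l ∈ Finset.univ.erase j, (1 - β * R i l * z l) ≤ 1 :=
      Finset.prod_le_one (fun l _ => hfac l) (fun l _ => hfac1 l)
    have hE0 : 0 ≤ ∏ l ∈ Finset.univ.erase j, (1 - β * R i l * z l) :=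
      Finset.prod_nonneg (fun l _ => hfac l)
    have hsplit := Finset.mul_prod_erase Finset.univ (fun l => 1 - β * R i l * z l)
      (Finset.mem_univ j)
    rw [hprod] at hsplit
    have hsplit' : (1 - β * R i j * z j) * ∏ l ∈ Finset.univ.erase j, (1 - β * R i l * z l) = 1 := by
      simpa using hsplit
    have hgej : 1 ≤ 1 - β * R i j * z j := by
      nlinarith [mul_le_mul_of_nonneg_left hE (hfac j)]
    have : β * (R i j * z j) = 0 := by
      have hle : β * R i j * z j ≤ 0 := by linarith
      have hge : 0 ≤ β * R i j * z j :=
        mul_nonneg (mul_nonneg hβ.le (hR i j).1) (hz j).1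
      nlinarith
    rcases mul_eq_zero.mp this with h' | h'
    · exact absurd h' (ne_of_gt hβ)
    · exact h'
  have hprop : ∀ k : ℕ, ∀ i j : Fin n, z i = 0 → (R ^ k) i j ≠ 0 → z j = 0 := by
    intro k
    induction k with
    | zero =>
      intro i j hi hij
      rw [pow_zero] at hij
      have hij' : i = j := by
        by_contra hne
        exact hij (Matrix.one_apply_ne hne)
      rw [← hij']; exact hi
    | succ k ih =>
      intro i j hi hij
      rw [pow_succ', Matrix.mul_apply] at hij
      have : ∃ l, R i l * (R ^ k) l j ≠ 0 := by
        by_contra hc; push_neg at hc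
        exact hij (Finset.sum_eq_zero fun l _ => hc l)
      obtain ⟨l, hl⟩ := this
      have hRil : R i l ≠ 0 := fun h => hl (by rw [h, zero_mul])
      have hRkl : (R ^ k) l j ≠ 0 := fun h => hl (by rw [h, mul_zero])
      have hzl : z l = 0 := by
        rcases mul_eq_zero.mp (hzero i hi l) with h' | h'
        · exact absurd h' hRil
        · exact h'
      exact ih l j hzl hRkl
  obtain ⟨j, hj⟩ := Function.ne_iff.mp hz0
  intro i
  rcases lt_or_eq_of_le (hz i).1 with h | h
  · exact h
  · exfalso
    obtain ⟨k, _, hk⟩ := hirr i j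
    exact hj (by simpa using hprop k i j h.symm hk)


set_option maxHeartbeats 1600000 in
lemma fp_le {n : ℕ} (hn : 2 ≤ n) (R : Matrix (Fin n) (Fin n) ℝ)
    (hR : ∀ i j, R i j ∈ Set.Icc (0:ℝ) 1) (hirr : MatIrred R)
    (μ : ℝ) (hμ0 : 0 < μ) (hμ1 : μ < 1)
    (β₁ β₂ : ℝ) (hβ₁0 : 0 < β₁) (h₁₂ : β₁ ≤ β₂) (h₂ : β₂ < 1)
    (z₁ z₂ : Fin n → ℝ)
    (hz₁ : ∀ i, z₁ i ∈ Set.Icc (0:ℝ) 1) (hfix₁ : F R β₁ μ z₁ = z₁)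
    (hz₂ : ∀ i, z₂ i ∈ Set.Icc (0:ℝ) 1) (hfix₂ : F R β₂ μ z₂ = z₂)
    (hz₁pos : ∀ i, 0 < z₁ i) (hz₂pos : ∀ i, 0 < z₂ i) :
    ∀ i, z₁ i ≤ z₂ i := by
  have hβ₂0 : 0 < β₂ := lt_of_lt_of_le hβ₁0 h₁₂
  have key : ∀ i, z₁ i ≤ z₂ i := by
    have huniv : (Finset.univ : Finset (Fin n)).Nonempty := ⟨⟨0, by omega⟩, Finset.mem_univ _⟩
    obtain ⟨i₀, -, hmax⟩ := Finset.exists_max_image Finset.univ (fun i => z₁ i / z₂ i) huniv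
    set t := z₁ i₀ / z₂ i₀ with ht_def
    have hle : ∀ i, z₁ i ≤ t * z₂ i := by
      intro i
      have h := hmax i (Finset.mem_univ i)
      rw [div_le_div_iff₀ (hz₂pos i) (hz₂pos i₀)] at h
      rw [ht_def, div_mul_eq_mul_div, le_div_iff₀ (hz₂pos i₀)]
      linarith
    have heq : z₁ i₀ = t * z₂ i₀ := (div_mul_cancel₀ _ (ne_of_gt (hz₂pos i₀))).symm
    by_cases hT : t ≤ 1
    · intro i
      calc z₁ i ≤ t * z₂ i := hle i
        _ ≤ 1 * z₂ i := mul_le_mul_of_nonneg_right hT (hz₂pos i).le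
        _ = z₂ i := one_mul _
    · exfalso
      push_neg at hT
      have ht0 : 0 < t := by linarith
      set w := fun j => z₁ j / t with hw_def
      have htw : ∀ j, t * w j = z₁ j := fun j => mul_div_cancel₀ _ (ne_of_gt ht0)
      have hw_pos : ∀ j, 0 < w j := fun j => div_pos (hz₁pos j) ht0
      have hw_le1 : ∀ j, w j ≤ 1 := by
        intro j
        rw [hw_def]
        rw [div_le_one ht0]
        have := (hz₁ j).2; linarith
      have hw_le_z₂ : ∀ j, w j ≤ z₂ j := by
        intro j
        rw [hw_def, div_le_iff₀ ht0]
        have := hle j; linarith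
      -- c j
      set c := fun j => β₂ * R i₀ j * w j with hc_def
      have hc0 : ∀ j, 0 ≤ c j := fun j =>
        mul_nonneg (mul_nonneg hβ₂0.le (hR i₀ j).1) (hw_pos j).le
      have htc_eq : ∀ j, t * c j = β₂ * R i₀ j * z₁ j := by
        intro j; rw [hc_def]; rw [← htw j]; ring
      have htc_lt : ∀ j, t * c j < 1 := by
        intro j
        rw [htc_eq j]
        have h1 := (hR i₀ j).1; have h2 := (hR i₀ j).2
        have h3 := (hz₁ j).1; have h4 := (hz₁ j).2
        have hrz : R i₀ j * z₁ j ≤ 1 := mul_le_one₀ h2 h3 h4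
        have hrz0 : 0 ≤ R i₀ j * z₁ j := mul_nonneg h1 h3
        nlinarith [mul_le_of_le_one_right hβ₂0.le hrz]
      have htc_le : ∀ j, t * c j ≤ 1 := fun j => (htc_lt j).le
      obtain ⟨hPt0, hPtP1, hP1le, hsub⟩ :=
        one_sub_prod_le Finset.univ c t hT.le hc0 htc_le
      set Pt := ∏ j, (1 - t * c j) with hPt_def
      set P1 := ∏ j, (1 - c j) with hP1_def
      -- strict inequality Pt < P1
      obtain ⟨j₁, hj₁⟩ := row_ne R hirr i₀
      have hcj₁ : 0 < c j₁ :=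
        mul_pos (mul_pos hβ₂0 (lt_of_le_of_ne (hR i₀ j₁).1 (Ne.symm hj₁))) (hw_pos j₁)
      have hEt_pos : 0 < ∏ l ∈ Finset.univ.erase j₁, (1 - t * c l) :=
        Finset.prod_pos (fun l _ => by have := htc_lt l; linarith)
      have hPt_lt : Pt < P1 := by
        have e1 : Pt = (1 - t * c j₁) * ∏ l ∈ Finset.univ.erase j₁, (1 - t * c l) :=
          (Finset.mul_prod_erase Finset.univ _ (Finset.mem_univ j₁)).symm
        have e2 : P1 = (1 - c j₁) * ∏ l ∈ Finset.univ.erase j₁, (1 - c l) :=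
          (Finset.mul_prod_erase Finset.univ _ (Finset.mem_univ j₁)).symm
        have hlt : 1 - t * c j₁ < 1 - c j₁ := by nlinarith [hcj₁]
        have hEle : ∏ l ∈ Finset.univ.erase j₁, (1 - t * c l)
            ≤ ∏ l ∈ Finset.univ.erase j₁, (1 - c l) := by
          refine Finset.prod_le_prod (fun l _ => by have := htc_lt l; linarith)
            (fun l _ => by have := hc0 l; nlinarith)
        have hc1j : 0 ≤ 1 - c j₁ := by have h := htc_le j₁; have := hc0 j₁; nlinarith
        calc Pt = (1 - t * c j₁) * ∏ l ∈ Finset.univ.erase j₁, (1 - t * c l) := e1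
          _ < (1 - c j₁) * ∏ l ∈ Finset.univ.erase j₁, (1 - t * c l) :=
              mul_lt_mul_of_pos_right hlt hEt_pos
          _ ≤ (1 - c j₁) * ∏ l ∈ Finset.univ.erase j₁, (1 - c l) :=
              mul_le_mul_of_nonneg_left hEle hc1j
          _ = P1 := e2.symm
      -- the chain of inequalities at i₀
      have hfx₁ : z₁ i₀ = F R β₁ μ z₁ i₀ := (congrFun hfix₁ i₀).symm
      have hfx₂ : F R β₂ μ z₂ i₀ = z₂ i₀ := congrFun hfix₂ i₀
      have hA₁ : (0:ℝ) ≤ 1 - (1 - μ) * z₁ i₀ := by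
        have := (hz₁ i₀).2; nlinarith
      have step2 : F R β₁ μ z₁ i₀ ≤ F R β₂ μ z₁ i₀ := by
        simp only [F]
        have hprodle : ∏ j, (1 - β₂ * R i₀ j * z₁ j) ≤ ∏ j, (1 - β₁ * R i₀ j * z₁ j) := by
          refine Finset.prod_le_prod (fun j _ => by
              have := htc_lt j; rw [htc_eq j] at this; linarith)
            (fun j _ => by
              have h1 := mul_nonneg (hR i₀ j).1 (hz₁ j).1
              nlinarith)
        linarith [mul_le_mul_of_nonneg_left hprodle hA₁]
      have step3 : F R β₂ μ z₁ i₀ < t * F R β₂ μ w i₀ := by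
        simp only [F]
        have hpe1 : ∏ j, (1 - β₂ * R i₀ j * z₁ j) = Pt := by
          rw [hPt_def]
          exact Finset.prod_congr rfl (fun j _ => by rw [htc_eq j])
        have hpe2 : ∏ j, (1 - β₂ * R i₀ j * w j) = P1 := by
          rw [hP1_def]
        rw [hpe1, hpe2, ← htw i₀]
        have hwpos := hw_pos i₀
        have hawt : 0 < (1 - μ) * (t * w i₀) := by
          have : 0 < t * w i₀ := mul_pos ht0 hwpos
          nlinarith
        exact step3_alg t (w i₀) Pt P1 (1 - μ) hsub (mul_lt_mul_of_pos_left hPt_lt hawt)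
      have step4 : F R β₂ μ w i₀ ≤ F R β₂ μ z₂ i₀ := by
        simp only [F]
        have hAw : (0:ℝ) ≤ 1 - (1 - μ) * w i₀ := by
          have := hw_le1 i₀; have := (hw_pos i₀).le; nlinarith
        have hAz : 1 - (1 - μ) * z₂ i₀ ≤ 1 - (1 - μ) * w i₀ := by
          have := hw_le_z₂ i₀; nlinarith
        have hPz0 : 0 ≤ ∏ j, (1 - β₂ * R i₀ j * z₂ j) := by
          refine Finset.prod_nonneg (fun j _ => ?_)
          have h1 := (hR i₀ j).1; have h2 := (hR i₀ j).2
          have h3 := (hz₂ j).1; have h4 := (hz₂ j).2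
          have hrz : R i₀ j * z₂ j ≤ 1 := mul_le_one₀ h2 h3 h4
          nlinarith [mul_le_of_le_one_right hβ₂0.le hrz]
        have hPle : ∏ j, (1 - β₂ * R i₀ j * z₂ j) ≤ ∏ j, (1 - β₂ * R i₀ j * w j) := by
          refine Finset.prod_le_prod (fun j _ => ?_) (fun j _ => ?_)
          · have h1 := (hR i₀ j).1; have h2 := (hR i₀ j).2
            have h3 := (hz₂ j).1; have h4 := (hz₂ j).2
            have hrz : R i₀ j * z₂ j ≤ 1 := mul_le_one₀ h2 h3 h4
            nlinarith [mul_le_of_le_one_right hβ₂0.le hrz]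
          · have h1 := mul_nonneg hβ₂0.le (hR i₀ j).1
            have := hw_le_z₂ j
            nlinarith
        linarith [mul_le_mul hAz hPle hPz0 hAw]
      have : z₁ i₀ < z₁ i₀ := by
        calc z₁ i₀ = F R β₁ μ z₁ i₀ := hfx₁
          _ ≤ F R β₂ μ z₁ i₀ := step2
          _ < t * F R β₂ μ w i₀ := step3
          _ ≤ t * F R β₂ μ z₂ i₀ := mul_le_mul_of_nonneg_left step4 ht0.le
          _ = t * z₂ i₀ := by rw [hfx₂]
          _ = z₁ i₀ := heq.symm
      exact absurd this (lt_irrefl _)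
  exact key

theorem endemic_state_monotone_in_beta (n : ℕ) (hn : 2 ≤ n) (R : Matrix (Fin n) (Fin n) ℝ)
    (hsymm : R.IsSymm) (hR : ∀ i j, R i j ∈ Set.Icc (0:ℝ) 1)
    (hdiag : ∀ i, R i i = 0) (hirr : MatIrred R)
    (μ : ℝ) (hμ : μ ∈ Set.Ioo (0:ℝ) 1)
    (β₁ β₂ : ℝ) (h₀ : μ / specRad R < β₁) (h₁₂ : β₁ ≤ β₂) (h₂ : β₂ < 1)
    (z₁ z₂ : Fin n → ℝ)
    (hz₁ : ∀ i, z₁ i ∈ Set.Icc (0:ℝ) 1) (hz₁0 : z₁ ≠ 0) (hfix₁ : F R β₁ μ z₁ = z₁)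
    (hz₂ : ∀ i, z₂ i ∈ Set.Icc (0:ℝ) 1) (hz₂0 : z₂ ≠ 0) (hfix₂ : F R β₂ μ z₂ = z₂) :
    (∀ i, z₁ i ≤ z₂ i) ∧
    Real.sqrt (∑ i, z₁ i ^ 2) ≤ Real.sqrt (∑ i, z₂ i ^ 2) := by
  obtain ⟨hμ0, hμ1⟩ := hμ
  have hspec : 0 ≤ specRad R := by
    unfold specRad
    exact Real.sSup_nonneg (by rintro r ⟨w, _, rfl⟩; exact abs_nonneg w)
  have hβ₁0 : 0 < β₁ := lt_of_le_of_lt (div_nonneg hμ0.le hspec) h₀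
  have hβ₂0 : 0 < β₂ := lt_of_lt_of_le hβ₁0 h₁₂
  have hβ₁1 : β₁ < 1 := lt_of_le_of_lt h₁₂ h₂
  have hz₁pos : ∀ i, 0 < z₁ i := fp_pos R hR hirr μ β₁ hμ0 hμ1 hβ₁0 hβ₁1 z₁ hz₁ hz₁0 hfix₁
  have hz₂pos : ∀ i, 0 < z₂ i := fp_pos R hR hirr μ β₂ hμ0 hμ1 hβ₂0 h₂ z₂ hz₂ hz₂0 hfix₂
  have key : ∀ i, z₁ i ≤ z₂ i :=
    fp_le hn R hR hirr μ hμ0 hμ1 β₁ β₂ hβ₁0 h₁₂ h₂ z₁ z₂ hz₁ hfix₁ hz₂ hfix₂ hz₁pos hz₂pos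
  refine ⟨key, Real.sqrt_le_sqrt (Finset.sum_le_sum fun i _ => ?_)⟩
  exact pow_le_pow_left₀ (hz₁pos i).le (key i) 2
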